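/- Let k ≥ 1 and let s be a primitive string of length n over Σ whose rotation matrix is sorted by a local ordering of context length k. Then for any symbols x₁, x₂, …, x_{k+1} ∈ Σ with k+1 ≤ n, the right shift map R_i ↦ R_{(i−1) mod n} is an order-preserving bijection between the set of rotations of s that have prefix x₂⋯x_{k+1} and end with x₁ and the set of rotations that have prefix x₁x₂⋯x_{k+1}: the shift of any rotation with prefix x₂⋯x_{k+1} ending with x₁ has prefix x₁x₂⋯x_{k+1}, every rotation with prefix x₁x₂⋯x_{k+1} arises this way, and for two rotations u, v both having prefix x₂⋯x_{k+1} and ending with x₁, u ≺ v if and only if the right shift of u ≺ the right shift of v. -/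

import Mathlib

open scoped Classical

variable {A : Type*}

/-- Longest common prefix of two lists. -/
def lcp [DecidableEq A] : List A → List A → List A
  | a :: as, b :: bs => if a = b then a :: lcp as bs else []
  | _, _ => []

/-- A string is primitive if its cyclic rotations are pairwise distinct. -/
def Primitive (s : List A) : Prop :=
  ∀ i j, i < s.length → j < s.length → s.rotate i = s.rotate j → i = j

/-- The context-adaptive comparison relation on rotations. -/
def Prec [DecidableEq A] (π : List A → A → A → Prop) (u v : List A) : Prop :=
  ∃ a b, u[(lcp u v).length]? = some a ∧ v[(lcp u v).length]? = some b ∧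
    π (lcp u v) a b

/-- The index of the right shift of the rotation `R_i` of a string of length
`n`, i.e. `(i - 1) mod n`. -/
def rshift (n i : ℕ) : ℕ := (i + n - 1) % n

/-!
A rotation ending with `x₁` has the form `t ++ [x₁]`, and its right shift is `x₁ :: t`.
Two such rotations `t ++ [x₁]`, `t' ++ [x₁]` with `t ≠ t'` of equal length are told apart
inside `t, t'`, at the same letters as `x₁ :: t` and `x₁ :: t'`, in the contexts `lcp t t'`
and `x₁ :: lcp t t'` respectively. Both contexts contain the common prefix `x₂⋯x_{k+1}`, so
they have length at least `k` and the same last `k` symbols, and a local ordering of context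
length `k` compares the two letters by the same order.
-/

def IsLocalOrdering (k : ℕ) (π : List A → A → A → Prop) : Prop :=
  ∀ x y : List A, x.drop (x.length - k) = y.drop (y.length - k) → π x = π y

theorem IsLocalOrdering.cons_eq {k : ℕ} {π : List A → A → A → Prop}
    (hπ : IsLocalOrdering k π) (c : A) {x : List A} (hx : k ≤ x.length) :
    π (c :: x) = π x := by
  apply hπ
  rw [List.length_cons, Nat.sub_add_comm hx, List.drop_succ_cons]

theorem rshift_add_one_mod {n i : ℕ} (hi : i < n) : (rshift n i + 1) % n = i := by
  rw [rshift, Nat.mod_add_mod, show i + n - 1 + 1 = i + n by omega, Nat.add_mod_right,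
    Nat.mod_eq_of_lt hi]

theorem rshift_mod_add_one {n j : ℕ} (hj : j < n) : rshift n ((j + 1) % n) = j := by
  rw [rshift, show (j + 1) % n + n - 1 = (j + 1) % n + (n - 1) by omega, Nat.mod_add_mod,
    show j + 1 + (n - 1) = j + n by omega, Nat.add_mod_right, Nat.mod_eq_of_lt hj]

theorem rotate_rshift_of_rotate_eq_append {s t : List A} {c : A} {i : ℕ} (hi : i < s.length)
    (h : s.rotate i = t ++ [c]) : s.rotate (rshift s.length i) = c :: t := by
  rw [← List.rotate_eq_rotate (n := 1), List.rotate_rotate, ← List.rotate_mod,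
    rshift_add_one_mod hi, h, List.rotate_cons_succ, List.rotate_zero]

theorem rotate_mod_add_one_of_rotate_eq_cons {s t : List A} {c : A} {j : ℕ}
    (h : s.rotate j = c :: t) : s.rotate ((j + 1) % s.length) = t ++ [c] := by
  rw [List.rotate_mod, ← List.rotate_rotate, h, List.rotate_cons_succ, List.rotate_zero]

theorem List.IsPrefix.of_append_singleton {l₁ l₂ : List A} {a : A} (h : l₁ <+: l₂ ++ [a])
    (hlen : l₁.length ≤ l₂.length) : l₁ <+: l₂ :=
  (List.prefix_concat_iff.mp h).resolve_left fun heq => by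
    rw [heq, List.length_append] at hlen
    simp at hlen

section DecidableEq

variable [DecidableEq A]

@[simp]
theorem lcp_self (u : List A) : lcp u u = u := by
  induction u with
  | nil => rfl
  | cons a u ih => simp [lcp, ih]

@[simp]
theorem lcp_cons_cons (c : A) (u v : List A) : lcp (c :: u) (c :: v) = c :: lcp u v := by
  simp [lcp]

theorem prefix_lcp : ∀ {p u v : List A}, p <+: u → p <+: v → p <+: lcp u v
  | [], _, _, _, _ => List.nil_prefix
  | _ :: _, [], _, hu, _ => by simp at hu
  | _ :: _, _ :: _, [], _, hv => by simp at hv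
  | _ :: _, _ :: _, _ :: _, hu, hv => by
      rw [List.cons_prefix_cons] at hu hv
      obtain ⟨rfl, hu⟩ := hu
      obtain ⟨rfl, hv⟩ := hv
      rw [lcp_cons_cons, List.cons_prefix_cons]
      exact ⟨rfl, prefix_lcp hu hv⟩

theorem length_lcp_lt_of_ne : ∀ {u v : List A}, u.length = v.length → u ≠ v →
    (lcp u v).length < u.length
  | [], [], _, hne => absurd rfl hne
  | [], _ :: _, hlen, _ | _ :: _, [], hlen, _ => by simp at hlen
  | a :: u, b :: v, hlen, hne => by
      by_cases hab : a = b
      · subst hab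
        simpa using length_lcp_lt_of_ne (u := u) (v := v) (by simpa using hlen) (by simpa using hne)
      · simp [lcp, hab]

theorem lcp_append_of_ne : ∀ {u v : List A} (u' v' : List A), u.length = v.length → u ≠ v →
    lcp (u ++ u') (v ++ v') = lcp u v
  | [], [], _, _, _, hne => absurd rfl hne
  | [], _ :: _, _, _, hlen, _ | _ :: _, [], _, _, hlen, _ => by simp at hlen
  | a :: u, b :: v, u', v', hlen, hne => by
      by_cases hab : a = b
      · subst hab
        simp only [List.cons_append, lcp_cons_cons]
        rw [lcp_append_of_ne u' v' (by simpa using hlen) (by simpa using hne)]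
      · simp [lcp, hab]

theorem not_prec_self (π : List A → A → A → Prop) (u : List A) : ¬ Prec π u u := by
  rintro ⟨a, b, ha, -, -⟩
  simp at ha

theorem prec_congr {π π' : List A → A → A → Prop} {u v : List A}
    (h : π (lcp u v) = π' (lcp u v)) : Prec π u v ↔ Prec π' u v := by
  simp only [Prec, h]

theorem prec_cons_cons (π : List A → A → A → Prop) (c : A) (u v : List A) :
    Prec π (c :: u) (c :: v) ↔ Prec (fun x => π (c :: x)) u v := by
  simp [Prec]

/-- Distinct words of equal length are compared before either of them ends. -/
theorem prec_append_of_ne (π : List A → A → A → Prop) {u v : List A} (u' v' : List A)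
    (hlen : u.length = v.length) (hne : u ≠ v) : Prec π (u ++ u') (v ++ v') ↔ Prec π u v := by
  have hlt := length_lcp_lt_of_ne hlen hne
  simp only [Prec, lcp_append_of_ne u' v' hlen hne, List.getElem?_append_left hlt,
    List.getElem?_append_left (hlen ▸ hlt)]

theorem IsLocalOrdering.prec_append_singleton_iff_prec_cons {k : ℕ}
    {π : List A → A → A → Prop} (hπ : IsLocalOrdering k π) (c : A) {u v : List A}
    (hlen : u.length = v.length) (hk : k ≤ (lcp u v).length) :
    Prec π (u ++ [c]) (v ++ [c]) ↔ Prec π (c :: u) (c :: v) := by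
  by_cases huv : u = v
  · subst huv
    exact iff_of_false (not_prec_self π _) (not_prec_self π _)
  rw [prec_append_of_ne π _ _ hlen huv, prec_cons_cons]
  exact prec_congr (hπ.cons_eq c hk).symm

end DecidableEq

theorem stmt9_general [DecidableEq A]
    (k : ℕ)
    (π : List A → A → A → Prop)
    (hloc : ∀ x y : List A,
      x.drop (x.length - k) = y.drop (y.length - k) → π x = π y)
    (s : List A)
    (x₁ : A) (y : List A) (hy : y.length = k) (hkn : k + 1 ≤ s.length) :
    (∀ i < s.length, y <+: s.rotate i → (s.rotate i).getLast? = some x₁ →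
      (x₁ :: y) <+: s.rotate (rshift s.length i)) ∧
    (∀ j < s.length, (x₁ :: y) <+: s.rotate j →
      ∃ i < s.length, y <+: s.rotate i ∧
        (s.rotate i).getLast? = some x₁ ∧ rshift s.length i = j) ∧
    (∀ i < s.length, ∀ j < s.length,
      y <+: s.rotate i → (s.rotate i).getLast? = some x₁ →
      y <+: s.rotate j → (s.rotate j).getLast? = some x₁ →
      (Prec π (s.rotate i) (s.rotate j) ↔
        Prec π (s.rotate (rshift s.length i)) (s.rotate (rshift s.length j)))) := by
  have decompose : ∀ i < s.length, y <+: s.rotate i → (s.rotate i).getLast? = some x₁ →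
      ∃ t, y <+: t ∧ t.length + 1 = s.length ∧ s.rotate i = t ++ [x₁] ∧
        s.rotate (rshift s.length i) = x₁ :: t := by
    intro i hi hyi hlast
    obtain ⟨t, ht⟩ := List.getLast?_eq_some_iff.mp hlast
    have htlen : t.length + 1 = s.length := by simpa using (congrArg List.length ht).symm
    rw [ht] at hyi
    exact ⟨t, hyi.of_append_singleton (by omega), htlen, ht,
      rotate_rshift_of_rotate_eq_append hi ht⟩
  refine ⟨fun i hi hyi hlast => ?_, fun j hj hpre => ?_, fun i hi j hj hyi hli hyj hlj => ?_⟩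
  · obtain ⟨t, hyt, -, -, hshift⟩ := decompose i hi hyi hlast
    rw [hshift, List.cons_prefix_cons]
    exact ⟨rfl, hyt⟩
  · obtain ⟨r, hr⟩ := hpre
    rw [List.cons_append] at hr
    have hrot := rotate_mod_add_one_of_rotate_eq_cons hr.symm
    refine ⟨(j + 1) % s.length, Nat.mod_lt _ (by omega), ?_, ?_, rshift_mod_add_one hj⟩
    · rw [hrot]
      exact (List.prefix_append y r).trans (List.prefix_append _ _)
    · rw [hrot, List.getLast?_concat]
  · obtain ⟨u, hyu, hu, hrot_i, hshift_i⟩ := decompose i hi hyi hli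
    obtain ⟨v, hyv, hv, hrot_j, hshift_j⟩ := decompose j hj hyj hlj
    rw [hrot_i, hrot_j, hshift_i, hshift_j]
    exact IsLocalOrdering.prec_append_singleton_iff_prec_cons hloc x₁ (by omega)
      (hy ▸ (prefix_lcp hyu hyv).length_le)

/-- for a local ordering of context length `k ≥ 1` (the order
`π x` depends only on the suffix of `x` of length `min (|x|, k)`, expressed by
`hloc`), for symbols `x₁` and a length-`k` string `y` (so that `x₁ :: y` is
`x₁x₂⋯x_{k+1}` and `y = x₂⋯x_{k+1}`, with `k+1 ≤ n`), the right shift map is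
an order-preserving bijection between rotations with prefix `y` ending with
`x₁` and rotations with prefix `x₁ :: y`. -/
theorem stmt9 [Fintype A] [DecidableEq A]
    (k : ℕ) (hk : 1 ≤ k)
    (π : List A → A → A → Prop) (hπ : ∀ x, IsStrictTotalOrder A (π x))
    (hloc : ∀ x y : List A,
      x.drop (x.length - k) = y.drop (y.length - k) → π x = π y)
    (s : List A) (hs : 1 ≤ s.length) (hprim : Primitive s)
    (x₁ : A) (y : List A) (hy : y.length = k) (hkn : k + 1 ≤ s.length) :
    (∀ i < s.length, y <+: s.rotate i → (s.rotate i).getLast? = some x₁ →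
      (x₁ :: y) <+: s.rotate (rshift s.length i)) ∧
    (∀ j < s.length, (x₁ :: y) <+: s.rotate j →
      ∃ i < s.length, y <+: s.rotate i ∧
        (s.rotate i).getLast? = some x₁ ∧ rshift s.length i = j) ∧
    (∀ i < s.length, ∀ j < s.length,
      y <+: s.rotate i → (s.rotate i).getLast? = some x₁ →
      y <+: s.rotate j → (s.rotate j).getLast? = some x₁ →
      (Prec π (s.rotate i) (s.rotate j) ↔
        Prec π (s.rotate (rshift s.length i)) (s.rotate (rshift s.length j)))) :=
  stmt9_general k π hloc s x₁ y hy hkn
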